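/- Let q ∈ ℚ[z_1,…,z_n] and g ∈ ℚ[z_1,…,z_n] with √⟨q⟩ = ⟨g⟩. If ⟨g(b)⟩ is a radical ideal of ℂ[z_{i+1},…,z_n] for a given b ∈ ℂ^i, then √⟨q(b)⟩ = ⟨g(b)⟩. -/
import Mathlib


open MvPolynomial

/-- Specialization of the first `i` variables at `b ∈ ℂ^i`. -/
noncomputable def spec18 (n i : ℕ) (b : Fin i → ℂ) :
    MvPolynomial (Fin n) ℚ →ₐ[ℚ] MvPolynomial {j : Fin n // i ≤ (j : ℕ)} ℂ :=
  MvPolynomial.aeval (fun j : Fin n =>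
    if h : (j : ℕ) < i then MvPolynomial.C (b ⟨j, h⟩)
    else MvPolynomial.X ⟨j, Nat.le_of_not_lt h⟩)

/-- If `√⟨q⟩ = ⟨g⟩` in `ℚ[z_1,…,z_n]` and `⟨g(b)⟩` is radical, then
`√⟨q(b)⟩ = ⟨g(b)⟩`. -/
theorem stmt_18 (n i : ℕ) (hin : i < n)
    (q g : MvPolynomial (Fin n) ℚ)
    (hrad : (Ideal.span {q}).radical = Ideal.span {g})
    (b : Fin i → ℂ)
    (hgb : (Ideal.span {spec18 n i b g}).IsRadical) :
    (Ideal.span {spec18 n i b q}).radical = Ideal.span {spec18 n i b g} := by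
  have hgq : g ∣ q := by
    rw [← Ideal.mem_span_singleton, ← hrad]
    exact Ideal.le_radical (Ideal.subset_span rfl)
  have hg : g ∈ (Ideal.span {q}).radical := hrad ▸ Ideal.subset_span rfl
  obtain ⟨m, hm⟩ := hg
  rw [Ideal.mem_span_singleton] at hm
  apply le_antisymm
  · rw [← Ideal.radical_eq_iff.mpr hgb]
    apply Ideal.radical_mono
    rw [Ideal.span_singleton_le_span_singleton]
    exact map_dvd (spec18 n i b) hgq
  · rw [Ideal.span_singleton_le_iff_mem]
    exact ⟨m, by rw [Ideal.mem_span_singleton, ← map_pow]; exact map_dvd (spec18 n i b) hm⟩
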